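/- There exists a constant C > 0, depending only on H, such that for every integer n ≥ 1 and every t ∈ [0,1], ∫₀^t (ΔK(t,s))² ds ≤ C n^{−2H}. -/

import Mathlib

open MeasureTheory intervalIntegral

/-- Grid projection `η(t) = ⌊nt⌋/n`. -/
noncomputable def gridEta (n : ℕ) (t : ℝ) : ℝ := (⌊(n : ℝ) * t⌋ : ℝ) / n

/-- The fractional kernel `K(t,s) = (t-s)^(H-1/2)` for `s < t`, and `0` otherwise. -/
noncomputable def fracK (H t s : ℝ) : ℝ := if s < t then (t - s) ^ (H - 1/2) else 0

/-- The discretization error kernel `ΔK(t,s) = K(η(t),s) - K(t,s)`. -/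
noncomputable def deltaK (H : ℝ) (n : ℕ) (t s : ℝ) : ℝ :=
  fracK H (gridEta n t) s - fracK H t s

lemma rpow_sq {x g : ℝ} (hx : 0 ≤ x) : (x ^ g) ^ 2 = x ^ (2 * g) := by
  rw [show (2:ℝ) * g = g * 2 by ring, Real.rpow_mul hx, Real.rpow_two]

lemma II_sub {H : ℝ} (hH0 : 0 < H) (hH1 : H < 1/2) (a b c : ℝ) :
    IntervalIntegrable (fun s => (c - s) ^ (2 * H - 1)) volume a b := by
  have h := intervalIntegrable_rpow' (a := c - a) (b := c - b)
    (r := 2 * H - 1) (by linarith)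
  simpa using h.comp_sub_left c

lemma int_sub_rpow {H : ℝ} (hH0 : 0 < H) (hH1 : H < 1/2) (a b c : ℝ) :
    (∫ s in a..b, (c - s) ^ (2 * H - 1)) =
      ((c - a) ^ (2 * H) - (c - b) ^ (2 * H)) / (2 * H) := by
  rw [integral_comp_sub_left (fun x => x ^ (2 * H - 1)) c,
    integral_rpow (Or.inl (by linarith))]
  ring_nf

/-- `∫₀^t (ΔK(t,s))² ds ≤ C n^(-2H)` uniformly in `n ≥ 1`, `t ∈ [0,1]`. -/
theorem weak_error_strong_bound (H : ℝ) (hH0 : 0 < H) (hH1 : H < 1/2) :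
    ∃ C > 0, ∀ n : ℕ, 1 ≤ n → ∀ t ∈ Set.Icc (0 : ℝ) 1,
      (∫ s in (0 : ℝ)..t, (deltaK H n t s) ^ 2) ≤ C * (n : ℝ) ^ (-(2 * H)) := by
  refine ⟨1 / H, by positivity, ?_⟩
  intro n hn t ht
  obtain ⟨ht0, ht1⟩ := ht
  set u := gridEta n t with hu
  have hnpos : (0:ℝ) < n := by exact_mod_cast hn
  have hfl : ((⌊(n : ℝ) * t⌋ : ℝ)) ≤ n * t := Int.floor_le _
  have hfl0 : (0:ℝ) ≤ (⌊(n : ℝ) * t⌋ : ℝ) := by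
    have : (0:ℤ) ≤ ⌊(n : ℝ) * t⌋ := Int.floor_nonneg.2 (by positivity)
    exact_mod_cast this
  have hu0 : 0 ≤ u := by rw [hu, gridEta]; positivity
  have hut : u ≤ t := by
    rw [hu, gridEta, div_le_iff₀ hnpos]
    linarith [hfl]
  have htu : t - u ≤ 1 / n := by
    rw [hu, gridEta]
    rw [sub_le_iff_le_add, ← add_div, le_div_iff₀ hnpos]
    have := Int.lt_floor_add_one ((n : ℝ) * t)
    linarith
  have h2H : (0:ℝ) < 2 * H := by linarith
  have h2H1 : (2:ℝ) * H - 1 < 0 := by linarith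
  -- measurability of the integrand
  have hmeas : Measurable (fun s => (deltaK H n t s) ^ 2) := by
    have hm : ∀ c : ℝ, Measurable (fun s => fracK H c s) := by
      intro c
      unfold fracK
      exact Measurable.ite (measurableSet_lt measurable_id measurable_const)
        (Measurable.pow (measurable_const.sub measurable_id) measurable_const) measurable_const
    exact (((hm u).sub (hm t)).pow_const 2)
  -- second piece: on [u, t], (deltaK)^2 = (t - s)^(2H-1)
  have E2 : Set.EqOn (fun s => (deltaK H n t s) ^ 2) (fun s => (t - s) ^ (2 * H - 1))
      (Set.uIcc u t) := by
    intro s hs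
    rw [Set.uIcc_of_le hut] at hs
    obtain ⟨hsu, hst⟩ := hs
    have h1 : fracK H u s = 0 := by rw [fracK, if_neg (not_lt.2 hsu)]
    simp only [deltaK, ← hu, h1, zero_sub, neg_sq]
    rcases lt_or_eq_of_le hst with h | h
    · rw [fracK, if_pos h, rpow_sq (by linarith)]
      ring_nf
    · rw [fracK, if_neg (by simp [h]), h, sub_self,
        Real.zero_rpow (by linarith : 2 * H - 1 ≠ 0)]
      norm_num
  have Int2 : IntervalIntegrable (fun s => (deltaK H n t s) ^ 2) volume u t := by
    refine (II_sub hH0 hH1 u t t).mono_fun hmeas.aestronglyMeasurable ?_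
    refine (ae_restrict_mem measurableSet_uIoc).mono ?_
    intro s hs
    have := E2 (Set.uIoc_subset_uIcc hs)
    simp only [Real.norm_eq_abs, this]
    exact le_rfl
  have S2 : (∫ s in u..t, (deltaK H n t s) ^ 2) = (t - u) ^ (2 * H) / (2 * H) := by
    rw [integral_congr E2, int_sub_rpow hH0 hH1, sub_self,
      Real.zero_rpow (ne_of_gt h2H)]
    ring_nf
  -- first piece bound
  set g : ℝ → ℝ := fun s => (u - s) ^ (2 * H - 1) - (t - s) ^ (2 * H - 1) with hg
  have Intg : IntervalIntegrable g volume 0 u :=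
    (II_sub hH0 hH1 0 u u).sub (II_sub hH0 hH1 0 u t)
  have hne : ∀ᵐ s : ℝ ∂volume, s ≠ u := by
    rw [ae_iff]
    have : {s : ℝ | ¬ s ≠ u} = {u} := by ext x; simp
    rw [this]
    exact measure_singleton u
  have key : ∀ s : ℝ, 0 ≤ s → s < u →
      (deltaK H n t s) ^ 2 ≤ g s := by
    intro s hs0 hsu
    have hus : 0 < u - s := by linarith
    have hts : 0 < t - s := by linarith
    have hab : (t - s) ^ (H - 1/2) ≤ (u - s) ^ (H - 1/2) :=
      Real.rpow_le_rpow_of_nonpos hus (by linarith) (by linarith)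
    have hbpos : 0 < (t - s) ^ (H - 1/2) := Real.rpow_pos_of_pos hts _
    have hst : s < t := by linarith
    have hd : deltaK H n t s = (u - s) ^ (H - 1/2) - (t - s) ^ (H - 1/2) := by
      rw [deltaK, fracK, fracK, if_pos hsu, if_pos hst]
    rw [hd, hg]
    have ea : ((u - s) ^ (H - 1/2)) ^ 2 = (u - s) ^ (2 * H - 1) := by
      rw [rpow_sq hus.le]; ring_nf
    have eb : ((t - s) ^ (H - 1/2)) ^ 2 = (t - s) ^ (2 * H - 1) := by
      rw [rpow_sq hts.le]; ring_nf
    simp only [← ea, ← eb]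
    nlinarith [hab, hbpos]
  have Int1 : IntervalIntegrable (fun s => (deltaK H n t s) ^ 2) volume 0 u := by
    refine Intg.mono_fun' hmeas.aestronglyMeasurable ?_
    refine ((ae_restrict_mem measurableSet_uIoc).and
      (ae_restrict_of_ae hne)).mono ?_
    rintro s ⟨hs, hsu⟩
    rw [Set.uIoc_of_le hu0] at hs
    have h := key s hs.1.le (lt_of_le_of_ne hs.2 hsu)
    simpa [abs_of_nonneg (sq_nonneg (deltaK H n t s))] using h
  have S1 : (∫ s in (0:ℝ)..u, (deltaK H n t s) ^ 2) ≤ (t - u) ^ (2 * H) / (2 * H) := by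
    have step : (∫ s in (0:ℝ)..u, (deltaK H n t s) ^ 2) ≤ ∫ s in (0:ℝ)..u, g s := by
      refine integral_mono_ae_restrict hu0 Int1 Intg ?_
      refine ((ae_restrict_mem measurableSet_Icc).and (ae_restrict_of_ae hne)).mono ?_
      rintro s ⟨hs, hsu⟩
      exact key s hs.1 (lt_of_le_of_ne hs.2 hsu)
    have gval : (∫ s in (0:ℝ)..u, g s) =
        (u ^ (2 * H) - t ^ (2 * H) + (t - u) ^ (2 * H)) / (2 * H) := by
      rw [hg]
      rw [integral_sub (II_sub hH0 hH1 0 u u) (II_sub hH0 hH1 0 u t),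
        int_sub_rpow hH0 hH1, int_sub_rpow hH0 hH1, sub_self,
        Real.zero_rpow (ne_of_gt h2H)]
      ring_nf
    have hmono : u ^ (2 * H) ≤ t ^ (2 * H) := Real.rpow_le_rpow hu0 hut h2H.le
    calc (∫ s in (0:ℝ)..u, (deltaK H n t s) ^ 2) ≤ _ := step
      _ = (u ^ (2 * H) - t ^ (2 * H) + (t - u) ^ (2 * H)) / (2 * H) := gval
      _ ≤ (t - u) ^ (2 * H) / (2 * H) := by
          exact (div_le_div_iff_of_pos_right h2H).mpr (by linarith)
  -- combine
  have split : (∫ s in (0:ℝ)..t, (deltaK H n t s) ^ 2) =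
      (∫ s in (0:ℝ)..u, (deltaK H n t s) ^ 2) + ∫ s in u..t, (deltaK H n t s) ^ 2 :=
    (integral_add_adjacent_intervals Int1 Int2).symm
  have hfin : (t - u) ^ (2 * H) ≤ ((n : ℝ)) ^ (-(2 * H)) := by
    have h1 : (t - u) ^ (2 * H) ≤ (1 / (n:ℝ)) ^ (2 * H) :=
      Real.rpow_le_rpow (by linarith) htu h2H.le
    have h2 : (1 / (n:ℝ)) ^ (2 * H) = (n : ℝ) ^ (-(2 * H)) := by
      rw [Real.rpow_neg (by positivity), one_div, Real.inv_rpow (by positivity)]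
    linarith [h1, h2.le]
  rw [split]
  have : (∫ s in (0:ℝ)..u, (deltaK H n t s) ^ 2) + (∫ s in u..t, (deltaK H n t s) ^ 2)
      ≤ (t - u) ^ (2 * H) / (2 * H) + (t - u) ^ (2 * H) / (2 * H) := by
    rw [S2]; linarith [S1]
  refine this.trans ?_
  have : (t - u) ^ (2 * H) / (2 * H) + (t - u) ^ (2 * H) / (2 * H)
      = (1 / H) * (t - u) ^ (2 * H) := by field_simp; ring
  rw [this]
  have hHinv : (0:ℝ) < 1 / H := by positivity
  calc (1 / H) * (t - u) ^ (2 * H) ≤ (1 / H) * ((n:ℝ) ^ (-(2 * H))) := by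
        exact mul_le_mul_of_nonneg_left hfin hHinv.le
    _ = 1 / H * (n:ℝ) ^ (-(2 * H)) := rfl
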